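/- Let Θ be a space of input histories over (E, I), with E finite, and let O be output sets with |O_ω| ≥ 2 for all ω ∈ E. (i) If Θ is tight, then every compatible family of causal functions on lowersets of Θ has a (necessarily unique) gluing: for every set U of lowersets of Θ and every family (f_λ)_{λ∈U} with f_λ ∈ CausFun(λ,O) and f_λ|_{λ∩μ} = f_μ|_{λ∩μ} for all λ, μ ∈ U, there exists a unique f ∈ CausFun(⋃U, O) with f|_λ = f_λ for all λ ∈ U. (ii) In general, this gluing property holds for all compatible families if and only if Θ admits no solipsistic contextuality witness. -/

import Mathlib

/-! In a tight space two distinct histories are never constrained at a common tip: the extension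
of the indicator of one of them is a consistent extended function separating them. So causality
only constrains domains, compatible families glue pointwise, and tightness passes to lowersets.
Conversely, distinct compatible histories `h`, `h'` with a common tip `ω` are constrained at `ω`,
so a family on `{↓h, ↓h'}` with different outputs at `ω` on `h` and on `h'` has no gluing. A
solipsistic witness provides such a pair, and by ∨-primality any such pair is a witness below
`h ∨ h'`. Without such pairs the space is tight: below any history containing `ω`, one of minimal
domain containing `ω` has `ω` as a tip, and two histories with tip `ω` below a common `k` coincide.
-/

namespace Caus

/-- Partial functions over events `E` with value family `V`:
each event is assigned an optional value. -/
abbrev PF (E : Type) (V : E → Type) : Type := ∀ ω : E, Option (V ω)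

variable {E : Type} {I O : E → Type}

/-- The total function `k` viewed as a partial function with full domain. -/
def toPF (k : ∀ ω : E, I ω) : PF E I := fun ω => some (k ω)

/-- Domain of a partial function. -/
def dom (h : PF E I) : Set E := {ω | (h ω).isSome}

/-- The order on partial functions: `h' ≤ h` iff `dom h' ⊆ dom h` and they agree on `dom h'`. -/
def le (h' h : PF E I) : Prop := ∀ ω : E, (h' ω).isSome → h' ω = h ω

/-- Compatibility: agreeing on the intersection of the domains. -/
def Compat (h h' : PF E I) : Prop :=
  ∀ ω : E, (h ω).isSome → (h' ω).isSome → h ω = h' ω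

/-- Join of two partial functions (union, when they are compatible). -/
def join (h h' : PF E I) : PF E I := fun ω => (h ω).orElse fun _ => h' ω

/-- `k` is the join (union) of the set `S` of partial functions. -/
def IsJoinOf (k : PF E I) (S : Set (PF E I)) : Prop :=
  ∀ (ω : E) (x : I ω), k ω = some x ↔ ∃ h ∈ S, h ω = some x

/-- `Ext Θ`: joins of nonempty pairwise-compatible subsets of `Θ`. -/
def Ext (Θ : Set (PF E I)) : Set (PF E I) :=
  {k | ∃ S ⊆ Θ, S.Nonempty ∧ S.Pairwise Compat ∧ IsJoinOf k S}

/-- A space of input histories: every `h ∈ Θ` is ∨-prime in `Ext Θ`. -/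
def IsSpace (Θ : Set (PF E I)) : Prop :=
  ∀ h ∈ Θ, ∀ k ∈ Ext Θ, ∀ k' ∈ Ext Θ, Compat k k' →
    le h (join k k') → le h k ∨ le h k'

/-- Tip events of `h` in `Θ`. -/
def tips (Θ : Set (PF E I)) (h : PF E I) : Set E :=
  {ω | ω ∈ dom h ∧ ∀ h' ∈ Θ, le h' h → h' ≠ h → ω ∉ dom h'}

/-- Extended functions: the output partial function has the same domain as the input. -/
def IsExtFun (Θ : Set (PF E I)) (F : PF E I → PF E O) : Prop :=
  ∀ k ∈ Ext Θ, dom (F k) = dom k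

/-- The consistency condition for extended functions. -/
def Consistent (Θ : Set (PF E I)) (F : PF E I → PF E O) : Prop :=
  ∀ k ∈ Ext Θ, ∀ k' ∈ Ext Θ, le k' k → le (F k') (F k)

/-- `h` and `h'` are constrained at `ω`: both have tip `ω` and every consistent
extended function with binary outputs takes the same value at `ω` on them. -/
def Constr (Θ : Set (PF E I)) (ω : E) (h h' : PF E I) : Prop :=
  h ∈ Θ ∧ h' ∈ Θ ∧ ω ∈ tips Θ h ∧ ω ∈ tips Θ h' ∧
  ∀ F : PF E I → PF E (fun _ => Bool),
    IsExtFun Θ F → Consistent Θ F → F h ω = F h' ω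

/-- Causal function conditions: `f h` is an assignment of outputs to the tips of `h`,
with equal outputs on histories constrained at an event. -/
def IsCausFun (Θ : Set (PF E I)) (f : PF E I → PF E O) : Prop :=
  (∀ h ∈ Θ, dom (f h) = tips Θ h) ∧
  ∀ (ω : E) (h h' : PF E I), Constr Θ ω h h' → f h ω = f h' ω

/-- Causal functions for `Θ` with outputs `W` (normalized to `none` outside `Θ`). -/
def CausFunSet (Θ : Set (PF E I)) (W : E → Type) : Set (PF E I → PF E W) :=
  {f | IsCausFun Θ f ∧ ∀ h ∉ Θ, ∀ ω : E, f h ω = none}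

open Classical in
/-- The extended causal function `Ext f` of a causal function `f`. -/
noncomputable def extCF (Θ : Set (PF E I)) (f : PF E I → PF E O) : PF E I → PF E O :=
  fun k ω =>
    if hh : ∃ h, h ∈ Θ ∧ le h k ∧ ω ∈ tips Θ h then f hh.choose ω else none

open Classical in
/-- `Prime F̂`: the causal function underlying a consistent extended function. -/
noncomputable def primeCF (Θ : Set (PF E I)) (F : PF E I → PF E O) : PF E I → PF E O :=
  fun h ω => if h ∈ Θ ∧ ω ∈ tips Θ h then F h ω else none

open Classical in
/-- Restriction of a causal function to a lowerset (normalized outside it). -/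
noncomputable def restrictCF (lam : Set (PF E I)) (f : PF E I → PF E O) :
    PF E I → PF E O :=
  fun h => if h ∈ lam then f h else fun _ => none

/-- The free-choice condition. -/
def FreeChoice (Θ : Set (PF E I)) : Prop := ∀ k : ∀ ω : E, I ω, toPF k ∈ Ext Θ

/-- Tightness. -/
def Tight (Θ : Set (PF E I)) : Prop :=
  ∀ k ∈ Ext Θ, ∀ ω ∈ dom k, ∃! h, h ∈ Θ ∧ le h k ∧ ω ∈ tips Θ h

/-- Maximal extended input histories. -/
def maxExt (Θ : Set (PF E I)) : Set (PF E I) :=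
  {k | k ∈ Ext Θ ∧ ∀ k' ∈ Ext Θ, le k k' → k' = k}

/-- Lowersets (downward-closed subsets) of a space `Θ`. -/
def IsLowersetOf (Θ lam : Set (PF E I)) : Prop :=
  lam ⊆ Θ ∧ ∀ h ∈ lam, ∀ h' ∈ Θ, le h' h → h' ∈ lam

/-- A solipsistic contextuality witness for `Θ`. -/
def SolWitness (Θ : Set (PF E I)) (k : PF E I) (ω : E) (h h' : PF E I) : Prop :=
  k ∈ Ext Θ ∧ ω ∈ dom k ∧ h ∈ Θ ∧ h' ∈ Θ ∧ h ≠ h' ∧ le h k ∧ le h' k ∧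
  Constr Θ ω h h' ∧ ¬ ∃ h'' ∈ Θ, le h h'' ∧ le h' h'' ∧ le h'' k

/-- The gluing property: every compatible family of causal functions on lowersets of
`Θ` has a unique gluing (i.e. the presheaf of causal functions is a sheaf). -/
def GluingProperty (Θ : Set (PF E I)) (W : E → Type) : Prop :=
  ∀ U : Set (Set (PF E I)), (∀ lam ∈ U, IsLowersetOf Θ lam) →
  ∀ ff : Set (PF E I) → (PF E I → PF E W),
    (∀ lam ∈ U, ff lam ∈ CausFunSet lam W) →
    (∀ lam ∈ U, ∀ mu ∈ U, ∀ h ∈ lam ∩ mu, ff lam h = ff mu h) →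
    ∃! g : PF E I → PF E W,
      g ∈ CausFunSet (⋃₀ U) W ∧ ∀ lam ∈ U, ∀ h ∈ lam, g h = ff lam h

section Order

lemma le.refl (h : PF E I) : le h h := fun _ _ => rfl

lemma le.trans {a b c : PF E I} (hab : le a b) (hbc : le b c) : le a c := fun ω hω =>
  (hab ω hω).trans (hbc ω (hab ω hω ▸ hω))

lemma le.mem_dom {a b : PF E I} (hab : le a b) {ω : E} (hω : ω ∈ dom a) : ω ∈ dom b :=
  show (b ω).isSome from hab ω hω ▸ hω

lemma le.eq_of_dom_subset {a b : PF E I} (hab : le a b) (hd : dom b ⊆ dom a) : a = b := by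
  funext ω
  by_cases ha : (a ω).isSome
  · exact hab ω ha
  · have hb : ¬ (b ω).isSome := fun hb => ha (hd hb)
    rw [Option.not_isSome_iff_eq_none] at ha hb
    rw [ha, hb]

lemma le.ncard_dom_lt [Finite E] {a b : PF E I} (hab : le a b) (hne : a ≠ b) :
    (dom a).ncard < (dom b).ncard :=
  Set.ncard_lt_ncard ⟨fun _ => hab.mem_dom, fun hd => hne (hab.eq_of_dom_subset hd)⟩
    (Set.toFinite _)

lemma Compat.symm {a b : PF E I} (h : Compat a b) : Compat b a :=
  fun ω ha hb => (h ω hb ha).symm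

lemma compat_of_le_of_le {a b k : PF E I} (ha : le a k) (hb : le b k) : Compat a b :=
  fun ω h1 h2 => (ha ω h1).trans (hb ω h2).symm

end Order

section Joins

lemma le_join_left (h h' : PF E I) : le h (join h h') := by
  intro ω hω
  obtain ⟨x, hx⟩ := Option.isSome_iff_exists.mp hω
  simp [join, hx]

lemma le_join_right {h h' : PF E I} (hc : Compat h h') : le h' (join h h') := by
  intro ω hω'
  cases hω : h ω with
  | none => simp [join, hω]
  | some x => simpa [join, hω] using (hc ω (by simp [hω]) hω').symm

lemma isJoinOf_join {h h' : PF E I} (hc : Compat h h') : IsJoinOf (join h h') {h, h'} := by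
  intro ω x
  constructor
  · intro hx
    cases hω : h ω with
    | none => exact ⟨h', by simp, by simpa [join, hω] using hx⟩
    | some y => exact ⟨h, by simp, by simpa [join, hω] using hx⟩
  · rintro ⟨g, hg | hg, hgx⟩ <;> subst hg
    · exact (le_join_left g h' ω (by simp [hgx])).symm.trans hgx
    · exact (le_join_right hc ω (by simp [hgx])).symm.trans hgx

lemma IsJoinOf.le_of_mem {k : PF E I} {S : Set (PF E I)} (hk : IsJoinOf k S) {h : PF E I}
    (hh : h ∈ S) : le h k := by
  intro ω hω
  obtain ⟨x, hx⟩ := Option.isSome_iff_exists.mp hω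
  rw [hx, (hk ω x).2 ⟨h, hh, hx⟩]

lemma subset_Ext (Θ : Set (PF E I)) : Θ ⊆ Ext Θ := fun h hh =>
  ⟨{h}, by simpa using hh, Set.singleton_nonempty h, Set.pairwise_singleton _ _,
    fun ω x => by simp⟩

lemma Ext_mono {Θ ν : Set (PF E I)} (hsub : ν ⊆ Θ) : Ext ν ⊆ Ext Θ :=
  fun _ ⟨S, hS, hne, hpw, hj⟩ => ⟨S, hS.trans hsub, hne, hpw, hj⟩

lemma join_mem_Ext {Θ : Set (PF E I)} {h h' : PF E I} (hh : h ∈ Θ) (hh' : h' ∈ Θ)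
    (hc : Compat h h') : join h h' ∈ Ext Θ :=
  ⟨{h, h'}, Set.insert_subset hh (Set.singleton_subset_iff.mpr hh'), Set.insert_nonempty _ _,
    Set.pairwise_pair.mpr fun _ => ⟨hc, hc.symm⟩, isJoinOf_join hc⟩

lemma exists_le_mem_dom_of_mem_Ext {Θ : Set (PF E I)} {k : PF E I} (hk : k ∈ Ext Θ) {ω : E}
    (hω : ω ∈ dom k) : ∃ h ∈ Θ, le h k ∧ ω ∈ dom h := by
  obtain ⟨S, hSΘ, -, -, hj⟩ := hk
  obtain ⟨x, hx⟩ := Option.isSome_iff_exists.mp hω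
  obtain ⟨h, hhS, hhx⟩ := (hj ω x).1 hx
  exact ⟨h, hSΘ hhS, hj.le_of_mem hhS, by simp [dom, hhx]⟩

end Joins

section Tips

lemma tips_anti {Θ ν : Set (PF E I)} (hsub : ν ⊆ Θ) (h : PF E I) : tips Θ h ⊆ tips ν h :=
  fun _ ⟨hω, hmin⟩ => ⟨hω, fun g hg => hmin g (hsub hg)⟩

lemma IsLowersetOf.tips_eq {Θ ν : Set (PF E I)} (hν : IsLowersetOf Θ ν) {h : PF E I}
    (hh : h ∈ ν) : tips ν h = tips Θ h :=
  Set.Subset.antisymm (fun _ ⟨hω, hmin⟩ => ⟨hω, fun g hg hle => hmin g (hν.2 h hh g hg hle) hle⟩)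
    (tips_anti hν.1 h)

lemma isLowersetOf_sUnion {Θ : Set (PF E I)} {U : Set (Set (PF E I))}
    (hU : ∀ lam ∈ U, IsLowersetOf Θ lam) : IsLowersetOf Θ (⋃₀ U) :=
  ⟨fun _ ⟨lam, hlam, hp⟩ => (hU lam hlam).1 hp,
    fun p ⟨lam, hlam, hp⟩ p' hp' hle => ⟨lam, hlam, (hU lam hlam).2 p hp p' hp' hle⟩⟩

lemma eq_of_le_of_mem_tips {Θ : Set (PF E I)} {p q : PF E I} {ω : E} (hp : p ∈ Θ)
    (hpq : le p q) (hq : ω ∈ tips Θ q) (hω : ω ∈ dom p) : p = q := by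
  by_contra hne
  exact hq.2 p hp hpq hne hω

lemma exists_le_mem_tips [Finite E] {Θ : Set (PF E I)} {h : PF E I} (hh : h ∈ Θ) {ω : E}
    (hω : ω ∈ dom h) : ∃ g ∈ Θ, le g h ∧ ω ∈ tips Θ g := by
  obtain ⟨g, ⟨hgΘ, hgh, hωg⟩, hmin⟩ := (measure fun g : PF E I => (dom g).ncard).wf.has_min
    {g | g ∈ Θ ∧ le g h ∧ ω ∈ dom g} ⟨h, hh, le.refl h, hω⟩
  refine ⟨g, hgΘ, hgh, hωg, fun g' hg' hle hne hωg' => ?_⟩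
  exact hmin g' ⟨hg', hle.trans hgh, hωg'⟩ (hle.ncard_dom_lt hne)

end Tips

section Constraints

lemma constr_of_compat {Θ : Set (PF E I)} {ω : E} {h h' : PF E I} (hh : h ∈ Θ) (hh' : h' ∈ Θ)
    (hc : Compat h h') (hω : ω ∈ tips Θ h) (hω' : ω ∈ tips Θ h') : Constr Θ ω h h' := by
  refine ⟨hh, hh', hω, hω', fun F hF hFc => ?_⟩
  have hj : join h h' ∈ Ext Θ := join_mem_Ext hh hh' hc
  have hωF : ω ∈ dom (F h) := (hF h (subset_Ext Θ hh)).symm ▸ hω.1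
  have hωF' : ω ∈ dom (F h') := (hF h' (subset_Ext Θ hh')).symm ▸ hω'.1
  rw [hFc _ hj h (subset_Ext Θ hh) (le_join_left h h') ω hωF,
    hFc _ hj h' (subset_Ext Θ hh') (le_join_right hc) ω hωF']

lemma Tight.extCF_eq {Θ : Set (PF E I)} (hΘ : Tight Θ) (f : PF E I → PF E O) {k : PF E I}
    (hk : k ∈ Ext Θ) {h : PF E I} (hh : h ∈ Θ) (hhk : le h k) {ω : E} (hω : ω ∈ tips Θ h) :
    extCF Θ f k ω = f h ω := by
  have hex : ∃ h, h ∈ Θ ∧ le h k ∧ ω ∈ tips Θ h := ⟨h, hh, hhk, hω⟩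
  rw [extCF, dif_pos hex, (hΘ k hk ω (hhk.mem_dom hω.1)).unique hex.choose_spec ⟨hh, hhk, hω⟩]

lemma extCF_of_not_exists {Θ : Set (PF E I)} (f : PF E I → PF E O) {k : PF E I} {ω : E}
    (hω : ¬ ∃ h, h ∈ Θ ∧ le h k ∧ ω ∈ tips Θ h) : extCF Θ f k ω = none :=
  dif_neg hω

lemma Tight.isExtFun_extCF {Θ : Set (PF E I)} (hΘ : Tight Θ) {f : PF E I → PF E O}
    (hf : ∀ h ∈ Θ, tips Θ h ⊆ dom (f h)) : IsExtFun Θ (extCF Θ f) := by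
  intro k hk
  ext ω
  constructor
  · intro hω
    by_cases hex : ∃ h, h ∈ Θ ∧ le h k ∧ ω ∈ tips Θ h
    · obtain ⟨h, -, hhk, hωh⟩ := hex
      exact hhk.mem_dom hωh.1
    · simp [dom, extCF_of_not_exists f hex] at hω
  · intro hω
    obtain ⟨h, ⟨hh, hhk, hωh⟩, -⟩ := hΘ k hk ω hω
    show ω ∈ dom (extCF Θ f k)
    simpa [dom, hΘ.extCF_eq f hk hh hhk hωh] using hf h hh hωh

lemma Tight.consistent_extCF {Θ : Set (PF E I)} (hΘ : Tight Θ) (f : PF E I → PF E O) :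
    Consistent Θ (extCF Θ f) := by
  intro k hk k' hk' hle ω hω
  by_cases hex : ∃ h, h ∈ Θ ∧ le h k' ∧ ω ∈ tips Θ h
  · obtain ⟨h, hh, hhk', hωh⟩ := hex
    rw [hΘ.extCF_eq f hk' hh hhk' hωh, hΘ.extCF_eq f hk hh (hhk'.trans hle) hωh]
  · simp [extCF_of_not_exists f hex] at hω

lemma Tight.eq_of_constr {Θ : Set (PF E I)} (hΘ : Tight Θ) {ω : E} {h h' : PF E I}
    (hc : Constr Θ ω h h') : h = h' := by
  obtain ⟨hh, hh', hω, hω', hcausal⟩ := hc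
  classical
  let f : PF E I → PF E (fun _ => Bool) := fun g _ => some (decide (g = h))
  have hF := hcausal (extCF Θ f) (hΘ.isExtFun_extCF fun _ _ _ _ => rfl) (hΘ.consistent_extCF f)
  rw [hΘ.extCF_eq f (subset_Ext Θ hh) hh (le.refl h) hω,
    hΘ.extCF_eq f (subset_Ext Θ hh') hh' (le.refl h') hω'] at hF
  simpa [f, eq_comm] using hF

lemma Tight.isCausFun {Θ : Set (PF E I)} (hΘ : Tight Θ) {f : PF E I → PF E O}
    (hf : ∀ h ∈ Θ, dom (f h) = tips Θ h) : IsCausFun Θ f :=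
  ⟨hf, fun _ _ _ hc => hΘ.eq_of_constr hc ▸ rfl⟩

end Constraints

section Gluing

lemma IsLowersetOf.tight {Θ ν : Set (PF E I)} (hΘ : Tight Θ) (hν : IsLowersetOf Θ ν) :
    Tight ν := by
  intro k hk ω hω
  have hkΘ := Ext_mono hν.1 hk
  obtain ⟨h₀, hh₀, hh₀k, hωh₀⟩ := exists_le_mem_dom_of_mem_Ext hk hω
  obtain ⟨u, ⟨hu, huh₀, hωu⟩, -⟩ := hΘ h₀ (subset_Ext Θ (hν.1 hh₀)) ω hωh₀
  have huν : u ∈ ν := hν.2 h₀ hh₀ u hu huh₀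
  refine ⟨u, ⟨huν, huh₀.trans hh₀k, hν.tips_eq huν ▸ hωu⟩, fun v ⟨hv, hvk, hωv⟩ => ?_⟩
  exact (hΘ k hkΘ ω hω).unique ⟨hν.1 hv, hvk, hν.tips_eq hv ▸ hωv⟩ ⟨hu, huh₀.trans hh₀k, hωu⟩

open Classical in
noncomputable def glue (U : Set (Set (PF E I))) (ff : Set (PF E I) → PF E I → PF E O) :
    PF E I → PF E O :=
  fun h => if hh : ∃ lam ∈ U, h ∈ lam then ff hh.choose h else fun _ => none

lemma glue_eq {U : Set (Set (PF E I))} {ff : Set (PF E I) → PF E I → PF E O}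
    (hff : ∀ lam ∈ U, ∀ mu ∈ U, ∀ h ∈ lam ∩ mu, ff lam h = ff mu h) {lam : Set (PF E I)}
    (hlam : lam ∈ U) {h : PF E I} (hh : h ∈ lam) : glue U ff h = ff lam h := by
  have hex : ∃ lam ∈ U, h ∈ lam := ⟨lam, hlam, hh⟩
  rw [glue, dif_pos hex]
  exact hff _ hex.choose_spec.1 lam hlam h ⟨hex.choose_spec.2, hh⟩

lemma glue_of_notMem {U : Set (Set (PF E I))} (ff : Set (PF E I) → PF E I → PF E O)
    {h : PF E I} (hh : h ∉ ⋃₀ U) : glue U ff h = fun _ => none :=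
  dif_neg fun ⟨lam, hlam, hhlam⟩ => hh ⟨lam, hlam, hhlam⟩

lemma Tight.gluingProperty {Θ : Set (PF E I)} (hΘ : Tight Θ) : GluingProperty Θ O := by
  intro U hU ff hff hcompat
  have hUΘ : IsLowersetOf Θ (⋃₀ U) := isLowersetOf_sUnion hU
  have hdom : ∀ h ∈ ⋃₀ U, dom (glue U ff h) = tips (⋃₀ U) h := by
    rintro h ⟨lam, hlam, hh⟩
    rw [glue_eq hcompat hlam hh, (hff lam hlam).1.1 h hh, (hU lam hlam).tips_eq hh,
      hUΘ.tips_eq ⟨lam, hlam, hh⟩]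
  refine ⟨glue U ff, ⟨⟨(hUΘ.tight hΘ).isCausFun hdom, fun h hh _ => ?_⟩,
    fun lam hlam h hh => glue_eq hcompat hlam hh⟩, ?_⟩
  · rw [glue_of_notMem ff hh]
  rintro g ⟨⟨-, hg⟩, hgff⟩
  funext h
  by_cases hh : h ∈ ⋃₀ U
  · obtain ⟨lam, hlam, hhlam⟩ := hh
    rw [hgff lam hlam h hhlam, glue_eq hcompat hlam hhlam]
  · funext ω
    rw [hg h hh ω, glue_of_notMem ff hh]

end Gluing

section Witnesses

lemma tight_of_eq_of_compat [Finite E] {Θ : Set (PF E I)}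
    (hΘ : ∀ (ω : E) (h h' : PF E I), h ∈ Θ → h' ∈ Θ → Compat h h' →
      ω ∈ tips Θ h → ω ∈ tips Θ h' → h = h') : Tight Θ := by
  intro k hk ω hωk
  obtain ⟨h₀, hh₀, hh₀k, hωh₀⟩ := exists_le_mem_dom_of_mem_Ext hk hωk
  obtain ⟨g, hg, hgh₀, hωg⟩ := exists_le_mem_tips hh₀ hωh₀
  have hgk : le g k := hgh₀.trans hh₀k
  exact ⟨g, ⟨hg, hgk, hωg⟩, fun v ⟨hv, hvk, hωv⟩ =>
    hΘ ω v g hv hg (compat_of_le_of_le hvk hgk) hωv hωg⟩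

/-- Any history below `h ∨ h'` is, by ∨-primality, below `h` or `h'`, so it cannot be above both
when `h` and `h'` have the common tip `ω`. -/
lemma solWitness_join {Θ : Set (PF E I)} (hS : IsSpace Θ) {ω : E} {h h' : PF E I}
    (hh : h ∈ Θ) (hh' : h' ∈ Θ) (hne : h ≠ h') (hc : Compat h h')
    (hω : ω ∈ tips Θ h) (hω' : ω ∈ tips Θ h') : SolWitness Θ (join h h') ω h h' := by
  refine ⟨join_mem_Ext hh hh' hc, (le_join_left h h').mem_dom hω.1, hh, hh', hne,
    le_join_left h h', le_join_right hc, constr_of_compat hh hh' hc hω hω', ?_⟩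
  rintro ⟨g, hg, hhg, hh'g, hgj⟩
  rcases hS g hg h (subset_Ext Θ hh) h' (subset_Ext Θ hh') hc hgj with hgh | hgh'
  · exact hne (eq_of_le_of_mem_tips hh' (hh'g.trans hgh) hω hω'.1).symm
  · exact hne (eq_of_le_of_mem_tips hh (hhg.trans hgh') hω' hω.1)

open Classical in
noncomputable def ofTips (lam : Set (PF E I)) (c : PF E I → ∀ ω, O ω) : PF E I → PF E O :=
  fun h ω => if h ∈ lam ∧ ω ∈ tips lam h then some (c h ω) else none

lemma ofTips_mem_causFunSet {lam : Set (PF E I)} {c : PF E I → ∀ ω, O ω}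
    (hc : ∀ ω h h', Constr lam ω h h' → c h ω = c h' ω) : ofTips lam c ∈ CausFunSet lam O := by
  refine ⟨⟨fun h hh => ?_, fun ω h h' hcon => ?_⟩, fun h hh ω => ?_⟩
  · ext ω
    simp [ofTips, dom, hh]
  · obtain ⟨hh, hh', hω, hω', -⟩ := id hcon
    simp [ofTips, hh, hh', hω, hω', hc ω h h' hcon]
  · simp [ofTips, hh]

lemma ofTips_eq_ofTips {Θ lam mu : Set (PF E I)} (hlam : IsLowersetOf Θ lam)
    (hmu : IsLowersetOf Θ mu) (c : PF E I → ∀ ω, O ω) {h : PF E I} (hh : h ∈ lam ∩ mu) :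
    ofTips lam c h = ofTips mu c h := by
  obtain ⟨hl, hm⟩ := Set.mem_inter_iff h lam mu |>.mp hh
  funext ω
  rw [ofTips, ofTips, hlam.tips_eq hl, hmu.tips_eq hm]
  classical
  exact if_congr (and_congr_left fun _ => iff_of_true hl hm) rfl rfl

def downset (Θ : Set (PF E I)) (h : PF E I) : Set (PF E I) := {g | g ∈ Θ ∧ le g h}

lemma isLowersetOf_downset (Θ : Set (PF E I)) (h : PF E I) : IsLowersetOf Θ (downset Θ h) :=
  ⟨fun _ hg => hg.1, fun _ hg _ hg' hle => ⟨hg', hle.trans hg.2⟩⟩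

lemma mem_downset_self {Θ : Set (PF E I)} {h : PF E I} (hh : h ∈ Θ) : h ∈ downset Θ h :=
  ⟨hh, le.refl h⟩

lemma Constr.eq_iff_of_downset {Θ : Set (PF E I)} {q g g' : PF E I} {ω : E}
    (hc : Constr (downset Θ q) ω g g') : g = q ↔ g' = q := by
  obtain ⟨hg, hg', hωg, hωg', -⟩ := hc
  constructor <;> rintro rfl
  · exact eq_of_le_of_mem_tips hg' hg'.2 hωg hωg'.1
  · exact eq_of_le_of_mem_tips hg hg.2 hωg' hωg.1

lemma not_gluingProperty_of_compat {Θ : Set (PF E I)} (hO : ∀ ω : E, ∃ x y : O ω, x ≠ y)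
    {ω : E} {h h' : PF E I} (hh : h ∈ Θ) (hh' : h' ∈ Θ) (hne : h ≠ h') (hc : Compat h h')
    (hω : ω ∈ tips Θ h) (hω' : ω ∈ tips Θ h') : ¬ GluingProperty Θ O := by
  intro hglue
  choose x y hxy using hO
  classical
  let c : PF E I → ∀ ω, O ω := fun g => if g = h' then y else x
  set U : Set (Set (PF E I)) := {downset Θ h, downset Θ h'}
  have hU : ∀ lam ∈ U, IsLowersetOf Θ lam := by
    rintro _ (rfl | rfl) <;> exact isLowersetOf_downset _ _
  have hh'h : h' ∉ downset Θ h := fun hh'h =>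
    hne (eq_of_le_of_mem_tips hh' hh'h.2 hω hω'.1).symm
  have hcaus : ∀ lam ∈ U, ∀ ω g g', Constr lam ω g g' → c g ω = c g' ω := by
    rintro lam (rfl | rfl) ω g g' hcon
    · have hg : g ≠ h' := fun hgh' => hh'h (hgh' ▸ hcon.1)
      have hg' : g' ≠ h' := fun hgh' => hh'h (hgh' ▸ hcon.2.1)
      simp [c, hg, hg']
    · have hiff := hcon.eq_iff_of_downset
      by_cases hgh' : g = h' <;> simp [c, hgh', hiff.not.mp, hiff.mp]
  obtain ⟨g, ⟨⟨⟨-, hgc⟩, -⟩, hgff⟩, -⟩ := hglue U hU (fun lam => ofTips lam c)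
    (fun lam hlam => ofTips_mem_causFunSet (hcaus lam hlam))
    (fun lam hlam mu hmu _ hg => ofTips_eq_ofTips (hU lam hlam) (hU mu hmu) c hg)
  have hUΘ : ⋃₀ U ⊆ Θ := (isLowersetOf_sUnion hU).1
  have hcausal := hgc ω h h' (constr_of_compat ⟨_, Or.inl rfl, mem_downset_self hh⟩
    ⟨_, Or.inr rfl, mem_downset_self hh'⟩ hc (tips_anti hUΘ h hω) (tips_anti hUΘ h' hω'))
  rw [hgff _ (Or.inl rfl) h (mem_downset_self hh), hgff _ (Or.inr rfl) h' (mem_downset_self hh')]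
    at hcausal
  have hωd := tips_anti (isLowersetOf_downset Θ h).1 h hω
  have hωd' := tips_anti (isLowersetOf_downset Θ h').1 h' hω'
  exact hxy ω (by simpa [ofTips, c, hne, mem_downset_self hh, mem_downset_self hh', hωd, hωd']
    using hcausal)

lemma tight_of_not_exists_solWitness [Finite E] {Θ : Set (PF E I)} (hS : IsSpace Θ)
    (hΘ : ¬ ∃ (k : PF E I) (ω : E) (h h' : PF E I), SolWitness Θ k ω h h') : Tight Θ :=
  tight_of_eq_of_compat fun ω h h' hh hh' hc hω hω' =>
    by_contra fun hne => hΘ ⟨_, ω, h, h', solWitness_join hS hh hh' hne hc hω hω'⟩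

lemma not_exists_solWitness_of_gluingProperty {Θ : Set (PF E I)}
    (hO : ∀ ω : E, ∃ x y : O ω, x ≠ y) (hglue : GluingProperty Θ O) :
    ¬ ∃ (k : PF E I) (ω : E) (h h' : PF E I), SolWitness Θ k ω h h' := by
  rintro ⟨k, ω, h, h', -, -, hh, hh', hne, hhk, hh'k, ⟨-, -, hω, hω', -⟩, -⟩
  exact not_gluingProperty_of_compat hO hh hh' hne (compat_of_le_of_le hhk hh'k) hω hω' hglue

end Witnesses

theorem stmt15_general {E : Type} [Fintype E] {I O : E → Type}
    (Θ : Set (PF E I)) (hS : IsSpace Θ)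
    (hO : ∀ ω : E, ∃ x y : O ω, x ≠ y) :
    (Tight Θ → GluingProperty Θ O) ∧
    (GluingProperty Θ O ↔
      ¬ ∃ (k : PF E I) (ω : E) (h h' : PF E I), SolWitness Θ k ω h h') :=
  ⟨Tight.gluingProperty, ⟨not_exists_solWitness_of_gluingProperty hO,
    fun hΘ => (tight_of_not_exists_solWitness hS hΘ).gluingProperty⟩⟩

/-- (i) if `Θ` is tight then the presheaf of causal functions is a
sheaf; (ii) in general, it is a sheaf iff `Θ` admits no solipsistic contextuality
witness. -/
theorem stmt15 {E : Type} [Fintype E] {I O : E → Type}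
    [∀ ω, Nonempty (I ω)]
    (Θ : Set (PF E I)) (hS : IsSpace Θ)
    (hO : ∀ ω : E, ∃ x y : O ω, x ≠ y) :
    (Tight Θ → GluingProperty Θ O) ∧
    (GluingProperty Θ O ↔
      ¬ ∃ (k : PF E I) (ω : E) (h h' : PF E I), SolWitness Θ k ω h h') :=
  stmt15_general Θ hS hO

end Caus
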